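/- arXiv:0808.1928 — 11 statements merged into one kernel-verified Lean document; each statement's English description precedes it below -/
import Mathlib

section
/- If a language L accepted by a DFA with n states (n ≥ 2) is not prefix-convex, then there exists a witness (u, v, w) with u a prefix of v, v a prefix of w, u ∈ L, w ∈ L, v ∉ L, and |w| ≤ 2n − 1. -/
/-!
A witness lives inside its longest word `w`: it is a pair of positions `p ≤ q` with
`w[:p] ∈ L`, `w[:q] ∉ L`, `w ∈ L`. Take `w` as short as possible, let `a` be the first accepted
position and `b` the first rejected one after `a`. Deleting a factor `w[j:k)` between two positions
with the same DFA state keeps every other prefix's state, so it would produce a shorter witness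
unless it straddles `a` or `b`. Hence the states at positions `0, …, b - 1` are distinct (a factor
straddling only `a` would join a rejecting and an accepting state), and so are those at positions
`b, …, |w|`. This gives `b ≤ n` and `|w| + 1 - b ≤ n`.
-/

/-- A language `L` is prefix-convex if whenever `u, w ∈ L` with `u` a prefix of `w`,
every word `v` with `u` a prefix of `v` and `v` a prefix of `w` is also in `L`. -/
def PrefixConvex {α : Type*} (L : Set (List α)) : Prop :=
  ∀ u v w : List α, u ∈ L → w ∈ L → u <+: w → u <+: v → v <+: w → v ∈ L

theorem Set.injOn_of_lt_imp_ne {α β : Type*} [LinearOrder α] {f : α → β} {s : Set α}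
    (h : ∀ x ∈ s, ∀ y ∈ s, x < y → f x ≠ f y) : s.InjOn f := by
  grind [Set.InjOn]

section

variable {α σ : Type*}

structure IsPrefixGap (L : Set (List α)) (w : List α) (p q : ℕ) : Prop where
  le : p ≤ q
  take_mem : w.take p ∈ L
  take_not_mem : w.take q ∉ L
  mem : w ∈ L

namespace IsPrefixGap

variable {L : Set (List α)} {w : List α} {p q : ℕ}

theorem lt (hg : IsPrefixGap L w p q) : p < q :=
  hg.le.lt_of_ne fun h => hg.take_not_mem (h ▸ hg.take_mem)

theorem lt_length (hg : IsPrefixGap L w p q) : q < w.length :=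
  Nat.lt_of_not_le fun h => hg.take_not_mem (by rw [List.take_of_length_le h]; exact hg.mem)

theorem exists_first (hg : IsPrefixGap L w p q) :
    ∃ a b, IsPrefixGap L w a b ∧ (∀ i < a, w.take i ∉ L) ∧ ∀ i, a ≤ i → i < b → w.take i ∈ L := by
  classical
  have hA : ∃ i, w.take i ∈ L := ⟨p, hg.take_mem⟩
  have hB : ∃ i, Nat.find hA ≤ i ∧ w.take i ∉ L :=
    ⟨q, (Nat.find_min' hA hg.take_mem).trans hg.le, hg.take_not_mem⟩
  obtain ⟨hab, hb⟩ := Nat.find_spec hB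
  refine ⟨_, _, ⟨hab, Nat.find_spec hA, hb, hg.mem⟩, fun i => Nat.find_min hA,
    fun i hai hib => ?_⟩
  by_contra hi
  exact Nat.find_min hB hib ⟨hai, hi⟩

end IsPrefixGap

theorem exists_isPrefixGap_of_not_prefixConvex {L : Set (List α)} (h : ¬ PrefixConvex L) :
    ∃ w p q, IsPrefixGap L w p q := by
  simp only [PrefixConvex, not_forall] at h
  obtain ⟨u, v, w, hu, hw, -, huv, hvw, hv⟩ := h
  rw [List.prefix_iff_eq_take.mp (huv.trans hvw)] at hu
  rw [List.prefix_iff_eq_take.mp hvw] at hv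
  exact ⟨w, u.length, v.length, huv.length_le, hu, hv, hw⟩

def List.cutOut (w : List α) (j k : ℕ) : List α := w.take j ++ w.drop k

namespace List

variable {w : List α} {i j k : ℕ}

theorem length_cutOut (hjk : j ≤ k) (hk : k ≤ w.length) :
    (w.cutOut j k).length = w.length - (k - j) := by
  simp only [cutOut, length_append, length_take, length_drop]
  omega

theorem take_cutOut_of_le (hj : j ≤ w.length) (hij : i ≤ j) :
    (w.cutOut j k).take i = w.take i := by
  rw [cutOut, take_append_of_le_length (by simp; omega), take_take, min_eq_left hij]

theorem take_cutOut_add (hj : j ≤ w.length) (t : ℕ) :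
    (w.cutOut j k).take (j + t) = w.take j ++ (w.drop k).take t := by
  rw [cutOut, take_append, length_take, min_eq_left hj, take_take]
  simp

end List

namespace DFA

variable (M : DFA α σ) {w : List α} {i j k : ℕ}

theorem mem_accepts_iff_of_eval_eq {x y : List α} (h : M.eval x = M.eval y) :
    x ∈ (M.accepts : Set (List α)) ↔ y ∈ (M.accepts : Set (List α)) := by
  change M.eval x ∈ M.accept ↔ M.eval y ∈ M.accept
  rw [h]

/-- `min i j + (i - k)` is the position `i` of `w` read in `w.cutOut j k`: `i` itself if `i ≤ j`,
and `i - (k - j)` if `k ≤ i`. -/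
theorem eval_take_cutOut (hs : M.eval (w.take j) = M.eval (w.take k)) (hjk : j ≤ k)
    (hj : j ≤ w.length) (hi : i ≤ j ∨ k ≤ i) :
    M.eval ((w.cutOut j k).take (min i j + (i - k))) = M.eval (w.take i) := by
  rcases hi with hi | hi
  · rw [min_eq_left hi, Nat.sub_eq_zero_of_le (hi.trans hjk), add_zero,
      List.take_cutOut_of_le hj hi]
  · obtain ⟨t, rfl⟩ := Nat.exists_eq_add_of_le hi
    rw [min_eq_right (hjk.trans hi), Nat.add_sub_cancel_left, List.take_cutOut_add hj,
      List.take_add, eval, evalFrom_of_append, evalFrom_of_append]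
    exact congrArg (M.evalFrom · _) hs

end DFA

theorem IsPrefixGap.cutOut {M : DFA α σ} {w : List α} {j k p q : ℕ}
    (hg : IsPrefixGap M.accepts w p q) (hs : M.eval (w.take j) = M.eval (w.take k))
    (hjk : j ≤ k) (hk : k ≤ w.length) (hp : p ≤ j ∨ k ≤ p) (hq : q ≤ j ∨ k ≤ q) :
    IsPrefixGap M.accepts (w.cutOut j k) (min p j + (p - k)) (min q j + (q - k)) := by
  have hj := hjk.trans hk
  have heval := M.eval_take_cutOut hs hjk hj (.inr hk)
  have hlen : min w.length j + (w.length - k) = (w.cutOut j k).length := by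
    rw [List.length_cutOut hjk hk]; omega
  rw [hlen, List.take_length, List.take_length] at heval
  have := hg.le
  exact ⟨by omega,
    (M.mem_accepts_iff_of_eval_eq (M.eval_take_cutOut hs hjk hj hp)).2 hg.take_mem,
    mt (M.mem_accepts_iff_of_eval_eq (M.eval_take_cutOut hs hjk hj hq)).1 hg.take_not_mem,
    (M.mem_accepts_iff_of_eval_eq heval).2 hg.mem⟩

namespace DFA

variable (M : DFA α σ) [Fintype σ] {w : List α} {p q : ℕ}

theorem length_add_one_le_of_isPrefixGap_of_minimal (hg : IsPrefixGap M.accepts w p q)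
    (hmin : ∀ w' p' q', IsPrefixGap M.accepts w' p' q' → w.length ≤ w'.length) :
    w.length + 1 ≤ 2 * Fintype.card σ := by
  obtain ⟨a, b, hab, hbefore, hbetween⟩ := hg.exists_first
  have hlt := hab.lt
  have hlt_length := hab.lt_length
  have hstate_ne : ∀ x y, x < y → y ≤ w.length → (a ≤ x ∨ y ≤ a) → (b ≤ x ∨ y ≤ b) →
      M.eval (w.take x) ≠ M.eval (w.take y) := fun x y hxy hy ha hb hs => by
    have := hmin _ _ _ (hab.cutOut hs hxy.le hy ha hb)
    rw [List.length_cutOut hxy.le hy] at this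
    omega
  have hinj_left : (Set.Iio b).InjOn fun i => M.eval (w.take i) := by
    refine Set.injOn_of_lt_imp_ne fun x _ y (hy : y < b) hxy hs => ?_
    by_cases ha : a ≤ x ∨ y ≤ a
    · exact hstate_ne x y hxy (hy.trans hlt_length).le ha (.inr hy.le) hs
    · simp only [not_or, not_le] at ha
      exact hbefore x ha.1 ((M.mem_accepts_iff_of_eval_eq hs).2 (hbetween y ha.2.le hy))
  have hinj_right : (Set.Icc b w.length).InjOn fun i => M.eval (w.take i) :=
    Set.injOn_of_lt_imp_ne fun x hx y hy hxy =>
      hstate_ne x y hxy hy.2 (.inl (hlt.le.trans hx.1)) (.inl hx.1)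
  have hcard_left : b ≤ Fintype.card σ := by
    simpa using Finset.card_le_card_of_injOn (s := Finset.range b) (t := Finset.univ) _
      (fun _ _ => Finset.mem_coe.2 (Finset.mem_univ _)) (by simpa using hinj_left)
  have hcard_right : w.length + 1 - b ≤ Fintype.card σ := by
    simpa using Finset.card_le_card_of_injOn (s := Finset.Icc b w.length) (t := Finset.univ) _
      (fun _ _ => Finset.mem_coe.2 (Finset.mem_univ _)) (by simpa using hinj_right)
  omega

theorem exists_isPrefixGap_length_add_one_le (h : ∃ w p q, IsPrefixGap M.accepts w p q) :
    ∃ w p q, IsPrefixGap M.accepts w p q ∧ w.length + 1 ≤ 2 * Fintype.card σ := by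
  classical
  have hex : ∃ m, ∃ w p q, IsPrefixGap M.accepts w p q ∧ w.length = m := by
    obtain ⟨w, p, q, hg⟩ := h
    exact ⟨_, w, p, q, hg, rfl⟩
  obtain ⟨w, p, q, hg, hw⟩ := Nat.find_spec hex
  refine ⟨w, p, q, hg, M.length_add_one_le_of_isPrefixGap_of_minimal hg fun w' p' q' hg' => ?_⟩
  exact hw ▸ Nat.find_min' hex ⟨w', p', q', hg', rfl⟩

end DFA

end

theorem nonPrefixConvex_short_witness_general {α σ : Type*} [Fintype σ] (M : DFA α σ) (n : ℕ)
    (hn : Fintype.card σ = n) (h : ¬ PrefixConvex M.accepts) :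
    ∃ u v w : List α, u <+: v ∧ v <+: w ∧ u ∈ M.accepts ∧ w ∈ M.accepts ∧
      v ∉ M.accepts ∧ w.length ≤ 2 * n - 1 := by
  obtain ⟨w, p, q, hg, hw⟩ :=
    M.exists_isPrefixGap_length_add_one_le (exists_isPrefixGap_of_not_prefixConvex h)
  exact ⟨w.take p, w.take q, w, List.take_prefix_take_left hg.le, List.take_prefix _ _,
    hg.take_mem, hg.mem, hg.take_not_mem, by omega⟩

theorem nonPrefixConvex_short_witness {α σ : Type*} [Fintype σ] (M : DFA α σ) (n : ℕ)
    (hn : Fintype.card σ = n) (h2 : 2 ≤ n) (h : ¬ PrefixConvex M.accepts) :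
    ∃ u v w : List α, u <+: v ∧ v <+: w ∧ u ∈ M.accepts ∧ w ∈ M.accepts ∧
      v ∉ M.accepts ∧ w.length ≤ 2 * n - 1 :=
  nonPrefixConvex_short_witness_general M n hn h
end

section
/- For every n ≥ 2, the unary language L = {a^(n-1+kn) : k ≥ 0} = a^(n−1)(a^n)* is not prefix-convex, it is accepted by a DFA with n states, and every witness (u, v, w) to its non-prefix-convexity satisfies |w| ≥ 2n − 1; moreover (a^(n−1), a^n, a^(2n−1)) is a witness. -/
/-- The unary language `a^(n-1)(a^n)* = {a^m : m ≡ n-1 (mod n)}`. -/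
def unaryL (n : ℕ) : Set (List Unit) := {w : List Unit | w.length % n = n - 1}

lemma repl_pref (m k : ℕ) (h : m ≤ k) :
    List.replicate m () <+: List.replicate k () :=
  ⟨List.replicate (k - m) (), by rw [← List.replicate_add]; congr 1; omega⟩

def unaryDFA (n : ℕ) (hn : 2 ≤ n) : DFA Unit (Fin n) :=
  ⟨fun s _ => ⟨(s.val + 1) % n, Nat.mod_lt _ (by omega)⟩, ⟨0, by omega⟩,
   {⟨n - 1, by omega⟩}⟩

lemma unary_eval (n : ℕ) (hn : 2 ≤ n) :
    ∀ (w : List Unit) (s : Fin n),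
      ((unaryDFA n hn).evalFrom s w).val = (s.val + w.length) % n := by
  intro w
  induction w with
  | nil => intro s; simp [DFA.evalFrom, Nat.mod_eq_of_lt s.isLt]
  | cons a t ih =>
      intro s
      have : (unaryDFA n hn).evalFrom s (a :: t)
          = (unaryDFA n hn).evalFrom ⟨(s.val + 1) % n, Nat.mod_lt _ (by omega)⟩ t := rfl
      rw [this, ih]
      rw [Nat.mod_add_mod, List.length_cons]
      congr 1
      omega

theorem unary_prefixConvex_lower_bound (n : ℕ) (hn : 2 ≤ n) :
    (∃ M : DFA Unit (Fin n), ∀ w : List Unit, w ∈ M.accepts ↔ w ∈ unaryL n) ∧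
    ¬ PrefixConvex (unaryL n) ∧
    (∀ u v w : List Unit,
      u <+: v → v <+: w → u ∈ unaryL n → w ∈ unaryL n → v ∉ unaryL n →
        2 * n - 1 ≤ w.length) ∧
    (List.replicate (n - 1) () <+: List.replicate n () ∧
     List.replicate n () <+: List.replicate (2 * n - 1) () ∧
     List.replicate (n - 1) () ∈ unaryL n ∧
     List.replicate (2 * n - 1) () ∈ unaryL n ∧
     List.replicate n () ∉ unaryL n) := by
  have mem_repl : ∀ m : ℕ, List.replicate m () ∈ unaryL n ↔ m % n = n - 1 := by
    intro m; simp [unaryL]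
  have h1 : (n - 1) % n = n - 1 := Nat.mod_eq_of_lt (by omega)
  have h2 : (2 * n - 1) % n = n - 1 := by
    have : 2 * n - 1 = (n - 1) + 1 * n := by omega
    rw [this, Nat.add_mul_mod_self_right, h1]
  have h3 : ¬ n % n = n - 1 := by
    rw [Nat.mod_self]; omega
  refine ⟨?_, ?_, ?_, ?_, ?_, ?_, ?_, ?_⟩
  · refine ⟨unaryDFA n hn, fun w => ?_⟩
    have hev := unary_eval n hn w (unaryDFA n hn).start
    have hst : ((unaryDFA n hn).start).val = 0 := rfl
    rw [hst, Nat.zero_add] at hev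
    constructor
    · intro h
      have : (unaryDFA n hn).eval w = ⟨n - 1, by omega⟩ := h
      have := congrArg Fin.val this
      rw [show (unaryDFA n hn).eval w = (unaryDFA n hn).evalFrom (unaryDFA n hn).start w from rfl,
        hev] at this
      exact this
    · intro h
      show (unaryDFA n hn).eval w ∈ ({⟨n - 1, by omega⟩} : Set (Fin n))
      have : (unaryDFA n hn).eval w = ⟨n - 1, by omega⟩ := by
        apply Fin.ext
        rw [show (unaryDFA n hn).eval w = (unaryDFA n hn).evalFrom (unaryDFA n hn).start w from rfl,
          hev]
        exact h
      rw [this]; rfl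
  · intro hpc
    have := hpc (List.replicate (n - 1) ()) (List.replicate n ()) (List.replicate (2 * n - 1) ())
      ((mem_repl _).2 h1) ((mem_repl _).2 h2)
      (repl_pref _ _ (by omega))
      (repl_pref _ _ (by omega))
      (repl_pref _ _ (by omega))
    exact h3 ((mem_repl _).1 this)
  · intro u v w huv hvw hu hw hv
    have hu' : u.length % n = n - 1 := hu
    have hw' : w.length % n = n - 1 := hw
    have hv' : ¬ v.length % n = n - 1 := hv
    have l1 : u.length ≤ v.length := huv.length_le
    have l2 : v.length ≤ w.length := hvw.length_le
    have hlt : u.length < w.length := by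
      rcases lt_or_eq_of_le (l1.trans l2) with h | h
      · exact h
      · exfalso; have : u.length = v.length := by omega
        rw [← this] at hv'; exact hv' hu'
    have hun : n - 1 ≤ u.length := by
      rcases Nat.lt_or_ge u.length n with h | h
      · rw [Nat.mod_eq_of_lt h] at hu'; omega
      · omega
    have hmod : u.length ≡ w.length [MOD n] := by
      unfold Nat.ModEq; rw [hu', hw']
    have hdvd : n ∣ w.length - u.length := (Nat.modEq_iff_dvd' (le_of_lt hlt)).1 hmod
    have := Nat.le_of_dvd (by omega) hdvd
    omega
  · exact repl_pref _ _ (by omega)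
  · exact repl_pref _ _ (by omega)
  · exact (mem_repl _).2 h1
  · exact (mem_repl _).2 h2
  · exact fun h => h3 ((mem_repl _).1 h)
end

section
/- If a language L accepted by a DFA with n states is not prefix-free, then there exists a witness (v, w) with v a proper prefix of w, v ∈ L, w ∈ L, and |w| ≤ 2n − 1. -/
/-! Let `v` and `v ++ u`, with `u ≠ []`, both be accepted by a DFA with `n` states. If `|v| ≥ n`,
or `|u| > n`, some state repeats along that factor, and cutting out the loop changes neither the
state reached after `v` nor the one after `v ++ u`, while a cut in `u` leaves `u` nonempty.
Pumping down until neither cut applies gives `|v| ≤ n - 1` and `|u| ≤ n`. -/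

def PrefixFree {α : Type*} (L : Set (List α)) : Prop :=
  ∀ v ∈ L, ∀ w ∈ L, v <+: w → v = w

namespace DFA

variable {α σ : Type*} (M : DFA α σ)

theorem eval_append_congr {x y : List α} (h : M.eval x = M.eval y) (z : List α) :
    M.eval (x ++ z) = M.eval (y ++ z) := by
  simp only [eval, evalFrom_of_append]
  exact congrArg (M.evalFrom · z) h

variable [Fintype σ]

theorem exists_shorter_evalFrom_eq {s : σ} {x : List α} (hlen : Fintype.card σ ≤ x.length) :
    ∃ y, M.evalFrom s y = M.evalFrom s x ∧ y.length < x.length ∧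
      x.length ≤ y.length + Fintype.card σ := by
  obtain ⟨q, a, b, c, rfl, hab, hb, ha, hbq, hc⟩ := M.evalFrom_split (s := s) hlen rfl
  have hb_pos : 0 < b.length := List.length_pos_iff.mpr hb
  refine ⟨a ++ c, ?_, ?_, ?_⟩
  · simp only [evalFrom_of_append, ha, hbq]
  · simp only [List.length_append]; omega
  · simp only [List.length_append]; omega

theorem exists_short_accepted_extension {v u : List α} (hu : u ≠ []) (hv : v ∈ M.accepts)
    (hvu : v ++ u ∈ M.accepts) :
    ∃ v' u', u' ≠ [] ∧ v' ∈ M.accepts ∧ v' ++ u' ∈ M.accepts ∧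
      v'.length < Fintype.card σ ∧ u'.length ≤ Fintype.card σ := by
  induction hlen : v.length + u.length using Nat.strong_induction_on generalizing v u with
  | _ N ih =>
  by_cases hv_long : Fintype.card σ ≤ v.length
  · obtain ⟨v', hv'eq, hv'lt, -⟩ := M.exists_shorter_evalFrom_eq (s := M.start) hv_long
    exact ih (v'.length + u.length) (by omega) hu (by rwa [mem_accepts, eval, hv'eq])
      (by rwa [mem_accepts, M.eval_append_congr hv'eq]) rfl
  by_cases hu_long : Fintype.card σ < u.length
  · obtain ⟨u', hu'eq, hu'lt, hu'ge⟩ :=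
      M.exists_shorter_evalFrom_eq (s := M.eval v) hu_long.le
    have hu' : u' ≠ [] := by rintro rfl; simp only [List.length_nil] at hu'ge; omega
    have heval : M.eval (v ++ u') = M.eval (v ++ u) := by
      simp only [eval, evalFrom_of_append]
      exact hu'eq
    exact ih (v.length + u'.length) (by omega) hu' hv (by rwa [mem_accepts, heval]) rfl
  exact ⟨v, u, hu, hv, hvu, by omega, by omega⟩

end DFA

theorem nonPrefixFree_short_witness {α σ : Type*} [Fintype σ] (M : DFA α σ) (n : ℕ)
    (hn : Fintype.card σ = n) (h : ¬ PrefixFree M.accepts) :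
    ∃ v w : List α, v <+: w ∧ v ≠ w ∧ v ∈ M.accepts ∧ w ∈ M.accepts ∧
      w.length ≤ 2 * n - 1 := by
  unfold PrefixFree at h
  push Not at h
  obtain ⟨v, hv, _, hw, ⟨u, rfl⟩, hne⟩ := h
  have hu : u ≠ [] := by rintro rfl; simp at hne
  obtain ⟨v', u', hu', hv', hvu', hv'_len, hu'_len⟩ := M.exists_short_accepted_extension hu hv hw
  refine ⟨v', v' ++ u', List.prefix_append _ _, by simpa using hu', hv', hvu', ?_⟩
  rw [List.length_append]
  omega
end

section
/- Let M be a DFA with n ≥ 2 states accepting L, and suppose L is not subword-closed. Then there exists a witness (v, w) with v a subword of w, w ∈ L, v ∉ L, and |w| ≤ n. -/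
/-!
It suffices to consider single-letter deletions: a witness `(x ++ z, x ++ a :: z)`. If
`|x ++ z| ≥ n`, the run of the automaton on `x ++ z` repeats a state, so `x ++ z = v₁ ++ v₂ ++ v₃`
with `v₂ ≠ []` and `v₁ ++ v₃` rejected. If cutting the loop `v₂` from `x ++ a :: z` as well leaves
an accepted word (as it does when `v₂` lies inside `x`), that is a shorter witness. Otherwise,
reinserting the cut letters (and `a`) into `v₁ ++ v₃` one at a time, from the left, must at some
step turn a rejected word into an accepted one; that step is a single-letter deletion witness that
is no longer and whose deleted letter lies further to the right. So `(|x ++ z|, |z|)` decreases lexicographically until `|x ++ a :: z| ≤ n`.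
-/

def SubwordClosed {α : Type*} (L : Set (List α)) : Prop :=
  ∀ w ∈ L, ∀ v : List α, v.Sublist w → v ∈ L

section

variable {α σ : Type*}

def IsDeletionWitness (L : Language α) (x : List α) (a : α) (z : List α) : Prop :=
  x ++ a :: z ∈ L ∧ x ++ z ∉ L

theorem exists_isDeletionWitness_of_sublist {L : Language α} {v w : List α}
    (hvw : v.Sublist w) (hw : w ∈ L) (hv : v ∉ L) : ∃ x a z, IsDeletionWitness L x a z := by
  induction hvw generalizing L with
  | slnil => exact absurd hw hv
  | @cons v w b _ ih =>
    by_cases hw' : w ∈ L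
    · exact ih hw' hv
    · exact ⟨[], b, w, hw, hw'⟩
  | @cons_cons v w b _ ih =>
    obtain ⟨x, a, z, hx⟩ := ih (L := {u | b :: u ∈ L}) hw hv
    exact ⟨b :: x, a, z, hx⟩

theorem exists_isDeletionWitness_of_append_mem {L : Language α} {X m Z : List α}
    (hw : X ++ m ++ Z ∈ L) (hv : X ++ Z ∉ L) :
    ∃ y b, y ++ [b] <+: m ∧ IsDeletionWitness L (X ++ y) b Z := by
  induction m generalizing X with
  | nil => exact absurd (by simpa using hw) hv
  | cons c m ih =>
    by_cases hc : X ++ c :: Z ∈ L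
    · exact ⟨[], c, by simp, by simpa using hc, by simpa using hv⟩
    · obtain ⟨y, b, hy, hyb⟩ := ih (X := X ++ [c]) (by simpa using hw) (by simpa using hc)
      exact ⟨c :: y, b, by simpa using hy, by simpa using hyb⟩

theorem List.append_append_eq_append_cases {v₁ v₂ v₃ x z : List α}
    (h : v₁ ++ v₂ ++ v₃ = x ++ z) :
    (∃ x₃, x = v₁ ++ v₂ ++ x₃ ∧ v₃ = x₃ ++ z) ∨
    (∃ x₂ z₁, x = v₁ ++ x₂ ∧ v₂ = x₂ ++ z₁ ∧ z = z₁ ++ v₃ ∧ z₁ ≠ []) ∨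
    (∃ z₁, v₁ = x ++ z₁ ∧ z = z₁ ++ v₂ ++ v₃) := by
  rcases List.append_eq_append_iff.mp h with ⟨x₃, hx, hv₃⟩ | ⟨c, hc, hz⟩
  · exact .inl ⟨x₃, hx, hv₃⟩
  rcases List.append_eq_append_iff.mp hc with ⟨x₂, hx, hv₂⟩ | ⟨z₁, hv₁, hc⟩
  · rcases eq_or_ne c [] with rfl | hc
    · exact .inl ⟨[], by simp [hx, hv₂], by simp [hz]⟩
    · exact .inr (.inl ⟨x₂, c, hx, hv₂, hz, hc⟩)
  · exact .inr (.inr ⟨z₁, hv₁, by simp [hz, hc]⟩)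

namespace DFA

variable (M : DFA α σ)

theorem append_mem_accepts_iff_of_eval_eq {p q : List α} (h : M.eval p = M.eval q)
    (s : List α) : p ++ s ∈ M.accepts ↔ q ++ s ∈ M.accepts := by
  simp only [mem_accepts, eval, evalFrom_of_append] at h ⊢
  rw [h]

theorem exists_eval_append_eq_of_card_le [Fintype σ] {u : List α}
    (hu : Fintype.card σ ≤ u.length) :
    ∃ v₁ v₂ v₃, u = v₁ ++ v₂ ++ v₃ ∧ v₂ ≠ [] ∧ M.eval (v₁ ++ v₂) = M.eval v₁ := by
  obtain ⟨q, v₁, v₂, v₃, hu, -, hv₂, hq₁, hq₂, -⟩ := M.evalFrom_split (s := M.start) hu rfl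
  exact ⟨v₁, v₂, v₃, hu, hv₂, by simp only [eval, evalFrom_of_append, hq₁, hq₂]⟩

end DFA

namespace IsDeletionWitness

variable {M : DFA α σ}

theorem exists_lex_lt [Fintype σ] {x z : List α} {a : α}
    (hxz : IsDeletionWitness M.accepts x a z) (hlen : Fintype.card σ ≤ x.length + z.length) :
    ∃ x' a' z', IsDeletionWitness M.accepts x' a' z' ∧
      Prod.Lex (· < ·) (· < ·) (x'.length + z'.length, z'.length)
        (x.length + z.length, z.length) := by
  obtain ⟨hw, hv⟩ := hxz
  obtain ⟨v₁, v₂, v₃, hsplit, hv₂, hloop⟩ :=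
    M.exists_eval_append_eq_of_card_le (u := x ++ z) (by simpa using hlen)
  have hv₁₃ : v₁ ++ v₃ ∉ M.accepts := by
    rwa [← M.append_mem_accepts_iff_of_eval_eq hloop, ← hsplit]
  have hv₂pos := List.length_pos_of_ne_nil hv₂
  rcases List.append_append_eq_append_cases hsplit.symm with
    ⟨x₃, rfl, rfl⟩ | ⟨x₂, z₁, rfl, rfl, rfl, hz₁⟩ | ⟨z₁, rfl, rfl⟩
  · -- the loop lies inside `x`
    have hw' := (M.append_mem_accepts_iff_of_eval_eq hloop (x₃ ++ a :: z)).mp (by simpa using hw)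
    refine ⟨v₁ ++ x₃, a, z, ⟨by simpa using hw', by simpa using hv₁₃⟩, Prod.Lex.left _ _ ?_⟩
    simp only [List.length_append]
    omega
  · -- the deletion point splits the loop
    obtain ⟨y, b, hy, hyb⟩ := exists_isDeletionWitness_of_append_mem (X := v₁)
      (m := x₂ ++ a :: z₁) (Z := v₃) (by simpa using hw) hv₁₃
    refine ⟨v₁ ++ y, b, v₃, hyb, Prod.lex_def.mpr ?_⟩
    have hy_len := hy.length_le
    have hz₁_pos := List.length_pos_of_ne_nil hz₁
    simp only [List.length_append, List.length_cons] at *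
    omega
  · -- the loop lies inside `z`
    by_cases h : x ++ a :: (z₁ ++ v₃) ∈ M.accepts
    · refine ⟨x, a, z₁ ++ v₃, ⟨h, by simpa using hv₁₃⟩, Prod.Lex.left _ _ ?_⟩
      simp only [List.length_append]
      omega
    · obtain ⟨y, b, hy, hyb⟩ := exists_isDeletionWitness_of_append_mem (X := x ++ a :: z₁)
        (m := v₂) (Z := v₃) (by simpa using hw) (by simpa using h)
      refine ⟨x ++ a :: z₁ ++ y, b, v₃, hyb, Prod.lex_def.mpr ?_⟩
      have hy_len := hy.length_le
      simp only [List.length_append, List.length_cons] at *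
      omega

theorem exists_length_le_card [Fintype σ] {x z : List α} {a : α}
    (hxz : IsDeletionWitness M.accepts x a z) :
    ∃ x' a' z', IsDeletionWitness M.accepts x' a' z' ∧
      (x' ++ a' :: z').length ≤ Fintype.card σ := by
  by_cases hlen : x.length + z.length < Fintype.card σ
  · exact ⟨x, a, z, hxz, by simp; omega⟩
  · obtain ⟨x', a', z', hxz', hlt⟩ := hxz.exists_lex_lt (not_lt.mp hlen)
    exact hxz'.exists_length_le_card
termination_by (x.length + z.length, z.length)
decreasing_by exact hlt

end IsDeletionWitness

end

theorem nonSubwordClosed_short_witness_general {α σ : Type*} [Fintype σ] (M : DFA α σ) (n : ℕ)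
    (hn : Fintype.card σ = n) (h : ¬ SubwordClosed M.accepts) :
    ∃ v w : List α, v.Sublist w ∧ w ∈ M.accepts ∧ v ∉ M.accepts ∧ w.length ≤ n := by
  simp only [SubwordClosed, not_forall, exists_prop] at h
  obtain ⟨w, hw, v, hvw, hv⟩ := h
  obtain ⟨x, a, z, hxz⟩ := exists_isDeletionWitness_of_sublist hvw hw hv
  obtain ⟨x', a', z', ⟨hw', hv'⟩, hlen⟩ := hxz.exists_length_le_card
  exact ⟨x' ++ z', x' ++ a' :: z', (z'.sublist_cons_self a').append_left x', hw', hv', hn ▸ hlen⟩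

theorem nonSubwordClosed_short_witness {α σ : Type*} [Fintype σ] (M : DFA α σ) (n : ℕ)
    (hn : Fintype.card σ = n) (h2 : 2 ≤ n) (h : ¬ SubwordClosed M.accepts) :
    ∃ v w : List α, v.Sublist w ∧ w ∈ M.accepts ∧ v ∉ M.accepts ∧ w.length ≤ n :=
  nonSubwordClosed_short_witness_general M n hn h
end

section
/- For every n ≥ 2, the unary language L = (a^n)*(ε + a + ⋯ + a^(n−2)) = {a^m : m mod n ≤ n−2} is accepted by a DFA with n states, is not subword-closed, and its minimal witness is (a^(n−1), a^n); in particular every witness (v, w) satisfies |w| ≥ n. -/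
/-- The unary language `(a^n)*(ε + a + ⋯ + a^(n-2)) = {a^m : m mod n ≤ n-2}`. -/
def unaryMod (n : ℕ) : Set (List Unit) := {w : List Unit | w.length % n ≤ n - 2}

/-!
The DFA is the cycle `0 → 1 → ⋯ → n-1 → 0` that counts the input length modulo `n`, accepting
in every state but `n - 1`. Below length `n` the language consists of the words of length at most
`n - 2`, which is closed under taking subwords; so a witness `(v, w)` needs `|w| ≥ n`, and
`(a^(n-1), a^n)` is one.
-/

section ModCounter

open Fin.NatCast

variable (α : Type*) (n : ℕ) [NeZero n]

def modCounterDFA (S : Set (Fin n)) : DFA α (Fin n) where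
  step q _ := q + 1
  start := 0
  accept := S

variable {α n}

theorem modCounterDFA_evalFrom (S : Set (Fin n)) (q : Fin n) (w : List α) :
    (modCounterDFA α n S).evalFrom q w = q + (w.length : Fin n) := by
  induction w generalizing q with
  | nil => simp
  | cons a w ih =>
    rw [DFA.evalFrom_cons, ih, List.length_cons, Nat.cast_succ, add_comm (w.length : Fin n),
      ← add_assoc]
    rfl

theorem mem_modCounterDFA_accepts (S : Set (Fin n)) (w : List α) :
    w ∈ (modCounterDFA α n S).accepts ↔ (w.length : Fin n) ∈ S := by
  rw [DFA.mem_accepts, DFA.eval, modCounterDFA_evalFrom]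
  exact iff_of_eq (congrArg (· ∈ S) (zero_add _))

end ModCounter

theorem mem_unaryMod_iff_of_length_lt {n : ℕ} {w : List Unit} (hw : w.length < n) :
    w ∈ unaryMod n ↔ w.length ≤ n - 2 := by
  rw [unaryMod, Set.mem_ofPred_eq, Nat.mod_eq_of_lt hw]

theorem replicate_mem_unaryMod_self (n : ℕ) : List.replicate n () ∈ unaryMod n := by
  simp [unaryMod]

theorem replicate_pred_notMem_unaryMod {n : ℕ} (hn : 2 ≤ n) :
    List.replicate (n - 1) () ∉ unaryMod n := by
  rw [mem_unaryMod_iff_of_length_lt] <;> simp only [List.length_replicate] <;> omega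

theorem le_length_of_sublist_of_mem_unaryMod_of_notMem {n : ℕ} {v w : List Unit}
    (hvw : v.Sublist w) (hw : w ∈ unaryMod n) (hv : v ∉ unaryMod n) : n ≤ w.length := by
  by_contra! hwn
  have hvn : v.length < n := hvw.length_le.trans_lt hwn
  rw [mem_unaryMod_iff_of_length_lt hwn] at hw
  rw [mem_unaryMod_iff_of_length_lt hvn] at hv
  exact hv (hvw.length_le.trans hw)

theorem unary_subwordClosed_lower_bound (n : ℕ) (hn : 2 ≤ n) :
    (∃ M : DFA Unit (Fin n), ∀ w : List Unit, w ∈ M.accepts ↔ w ∈ unaryMod n) ∧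
    ¬ SubwordClosed (unaryMod n) ∧
    (∀ v w : List Unit, v.Sublist w → w ∈ unaryMod n → v ∉ unaryMod n → n ≤ w.length) ∧
    (List.Sublist (List.replicate (n - 1) ()) (List.replicate n ()) ∧
     List.replicate n () ∈ unaryMod n ∧
     List.replicate (n - 1) () ∉ unaryMod n) := by
  have : NeZero n := ⟨by omega⟩
  have hsub : (List.replicate (n - 1) ()).Sublist (List.replicate n ()) :=
    (List.replicate_sublist_replicate ()).mpr (Nat.sub_le n 1)
  refine ⟨⟨modCounterDFA Unit n {q | (q : ℕ) ≤ n - 2}, fun w => ?_⟩,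
    fun h => replicate_pred_notMem_unaryMod hn (h _ (replicate_mem_unaryMod_self n) _ hsub),
    fun _ _ => le_length_of_sublist_of_mem_unaryMod_of_notMem,
    hsub, replicate_mem_unaryMod_self n, replicate_pred_notMem_unaryMod hn⟩
  rw [mem_modCounterDFA_accepts, Set.mem_ofPred_eq, Fin.val_natCast]
  rfl
end

section
/- Let M be a DFA with n ≥ 2 states accepting L, and suppose L is not subword-free. Then there exists a witness (u, w) with u a proper subword of w, u ∈ L, w ∈ L, and |w| ≤ 2n − 1. -/
/-! By the pumping lemma, an accepted word `w` with `n ≤ |w|` (`n` the number of states) loses a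
nonempty factor of length at most `n` and stays accepted, so it has an accepted proper subword `w'`
with `|w| ≤ |w'| + n`. Starting from the longer word of any witness and pumping down while the length
is at least `2n`, every intermediate word still has length at least `n`; the last step, taken from a
word of length below `2n`, is a short witness. -/

def SubwordFree {α : Type*} (L : Set (List α)) : Prop :=
  ∀ u ∈ L, ∀ w ∈ L, u.Sublist w → u = w

namespace DFA

variable {α σ : Type*} [Fintype σ] (M : DFA α σ)

theorem exists_shorter_sublist_mem_accepts {w : List α} (hw : w ∈ M.accepts)
    (hlen : Fintype.card σ ≤ w.length) :
    ∃ w' ∈ M.accepts, w'.Sublist w ∧ w'.length < w.length ∧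
      w.length ≤ w'.length + Fintype.card σ := by
  obtain ⟨a, b, c, rfl, hab, hb, hpump⟩ := M.pumping_lemma hw hlen
  have hac : a ++ c ∈ M.accepts :=
    hpump ⟨a ++ [], ⟨a, rfl, [], Language.nil_mem_kstar _, rfl⟩, c, rfl, by simp⟩
  have hb_pos : 0 < b.length := List.length_pos_iff.mpr hb
  refine ⟨a ++ c, hac, (a.sublist_append_left b).append_right c, ?_, ?_⟩ <;>
    simp only [List.length_append] <;> omega

theorem exists_proper_sublist_pair_length_lt {w : List α} (hw : w ∈ M.accepts)
    (hlen : Fintype.card σ ≤ w.length) :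
    ∃ u v : List α, u.Sublist v ∧ u ≠ v ∧ u ∈ M.accepts ∧ v ∈ M.accepts ∧
      v.length < 2 * Fintype.card σ := by
  obtain ⟨w', hw', hsub, hlt, hle⟩ := M.exists_shorter_sublist_mem_accepts hw hlen
  by_cases hshort : w.length < 2 * Fintype.card σ
  · exact ⟨w', w, hsub, fun h ↦ hlt.ne (congrArg List.length h), hw', hw, hshort⟩
  · exact exists_proper_sublist_pair_length_lt hw' (by omega)
termination_by w.length

end DFA

theorem nonSubwordFree_short_witness_general {α σ : Type*} [Fintype σ] (M : DFA α σ) (n : ℕ)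
    (hn : Fintype.card σ = n) (h : ¬ SubwordFree M.accepts) :
    ∃ u w : List α, u.Sublist w ∧ u ≠ w ∧ u ∈ M.accepts ∧ w ∈ M.accepts ∧
      w.length ≤ 2 * n - 1 := by
  simp only [SubwordFree, not_forall] at h
  obtain ⟨u, hu, w, hw, hsub, hne⟩ := h
  subst hn
  by_cases hshort : w.length < 2 * Fintype.card σ
  · exact ⟨u, w, hsub, hne, hu, hw, by omega⟩
  · obtain ⟨u', w', hsub', hne', hu', hw', hlt⟩ :=
      M.exists_proper_sublist_pair_length_lt hw (by omega)
    exact ⟨u', w', hsub', hne', hu', hw', by omega⟩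

theorem nonSubwordFree_short_witness {α σ : Type*} [Fintype σ] (M : DFA α σ) (n : ℕ)
    (hn : Fintype.card σ = n) (h2 : 2 ≤ n) (h : ¬ SubwordFree M.accepts) :
    ∃ u w : List α, u.Sublist w ∧ u ≠ w ∧ u ∈ M.accepts ∧ w ∈ M.accepts ∧
      w.length ≤ 2 * n - 1 :=
  nonSubwordFree_short_witness_general M n hn h
end

section
/- Let M be a DFA with n states accepting L. If v ∈ L has |v| > n and there exists u ∉ L with u a factor of v, and v is a shortest such word, then u is a suffix of v. -/
/-!
If `v = x u y` with `y = y' l` nonempty, then `x u y'` has the factor `u ∉ L` and is shorter than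
`v`, so by minimality it is rejected. Pumping down a loop inside `x u y'` (which is at least `n`
long) gives a shorter `p` with `p l ∈ L` and `p ∉ L`; then `p l` is a shorter accepted word with a
rejected factor, contradicting minimality.
-/

namespace DFA

variable {α σ : Type*} (M : DFA α σ)

theorem mem_accepts_append_iff_of_eval_eq {x y : List α} (h : M.eval x = M.eval y) (z : List α) :
    x ++ z ∈ M.accepts ↔ y ++ z ∈ M.accepts := by
  rw [eval] at h
  rw [mem_accepts, mem_accepts, eval, evalFrom_of_append, evalFrom_of_append, h]

theorem exists_shorter_of_append_singleton_mem_of_not_mem [Fintype σ] {p : List α} {l : α}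
    (hp : Fintype.card σ ≤ p.length) (hmem : p ++ [l] ∈ M.accepts) (hnot : p ∉ M.accepts) :
    ∃ p' : List α, p'.length < p.length ∧ p' ++ [l] ∈ M.accepts ∧ p' ∉ M.accepts := by
  obtain ⟨q, a, b, c, rfl, -, hb, ha, hq, -⟩ := M.evalFrom_split hp rfl
  have hloop : M.eval (a ++ b) = M.eval a := by
    rw [eval, evalFrom_of_append, ha, hq]
  rw [List.append_assoc _ c] at hmem
  rw [M.mem_accepts_append_iff_of_eval_eq hloop] at hmem hnot
  exact ⟨a ++ c, by simp [List.length_pos_iff.mpr hb], by rwa [List.append_assoc], hnot⟩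

end DFA

theorem long_minimal_factor_witness_is_suffix {α σ : Type*} [Fintype σ] (M : DFA α σ)
    (n : ℕ) (hn : Fintype.card σ = n) (v u : List α)
    (hv : v ∈ M.accepts) (hlen : n < v.length)
    (hu : u ∉ M.accepts) (hfac : u <:+: v)
    (hmin : ∀ v' ∈ M.accepts, (∃ u' : List α, u' ∉ M.accepts ∧ u' <:+: v') →
      v.length ≤ v'.length) :
    u <:+ v := by
  obtain ⟨x, y, rfl⟩ := hfac
  rcases y.eq_nil_or_concat with rfl | ⟨y, l, rfl⟩
  · exact ⟨x, by simp⟩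
  exfalso
  rw [List.concat_eq_append, ← List.append_assoc] at hv hlen hmin
  have hp : x ++ u ++ y ∉ M.accepts := fun h => by
    simpa using hmin _ h ⟨u, hu, x, y, rfl⟩
  obtain ⟨p', hshort, hp'l, hp'⟩ := M.exists_shorter_of_append_singleton_mem_of_not_mem
    (by simp only [List.length_append, List.length_singleton] at hlen ⊢; omega) hv hp
  have := hmin _ hp'l ⟨p', hp', (List.prefix_append _ _).isInfix⟩
  simp only [List.length_append, List.length_singleton] at this hshort
  omega
end

section
/- For every n ≥ 2, the language L = bb(a^n)^+ ∪ b(a^(n+1))^+ over alphabet {a, b} is accepted by a DFA with 2n + 5 states, is not suffix-free, and its shortest witness to non-suffix-freeness is (b a^(n(n+1)), bb a^(n(n+1))), of size n² + n + 2. -/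
/-- The language `bb(a^n)^+ ∪ b(a^(n+1))^+` over the alphabet `{a, b}`,
with `a := false` and `b := true`. -/
def suffixFreeL (n : ℕ) : Set (List Bool) :=
  {w | ∃ k : ℕ, 1 ≤ k ∧ w = [true, true] ++ List.replicate (k * n) false} ∪
  {w | ∃ k : ℕ, 1 ≤ k ∧ w = [true] ++ List.replicate (k * (n + 1)) false}

def SuffixFree {α : Type*} (L : Set (List α)) : Prop :=
  ∀ u ∈ L, ∀ w ∈ L, u <:+ w → u = w

/-!
A word of `L` is `b` or `bb` followed by a nonempty block of `a`'s, so a DFA only has to read the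
prefix (`start`, `b`, `bb`, plus a dead state) and then count the `a`'s modulo `n + 1` or `n`.

If `u` and `xu` lie in `L` with `x ≠ []`, the `b` that starts `u` must be the second letter of
`xu`. Hence `xu = bb a^m` and `u = b a^m`, so both `n` and `n + 1` divide `m > 0`, and by
coprimality `m ≥ n (n + 1)`; `m = n (n + 1)` gives the witness.
-/

open Fin.NatCast

theorem exists_eq_append_replicate_false_iff {p : ℕ} (hp : p ≠ 0) (pre w : List Bool) :
    (∃ k, 1 ≤ k ∧ w = pre ++ List.replicate (k * p) false) ↔
      ∃ v, true ∉ v ∧ w = pre ++ false :: v ∧ p ∣ v.length + 1 := by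
  constructor
  · rintro ⟨k, hk, rfl⟩
    obtain ⟨m, hm⟩ : ∃ m, k * p = m + 1 :=
      ⟨k * p - 1, by have := Nat.mul_le_mul hk (Nat.one_le_iff_ne_zero.2 hp); omega⟩
    refine ⟨List.replicate m false, by simp, by rw [hm, List.replicate_succ], k, ?_⟩
    rw [List.length_replicate, ← hm, Nat.mul_comm]
  · rintro ⟨v, hv, rfl, k, hk⟩
    refine ⟨k, Nat.one_le_iff_ne_zero.2 ?_, ?_⟩
    · rintro rfl
      simp at hk
    · have hv' : v = List.replicate v.length false :=
        List.eq_replicate_iff.2 ⟨rfl, fun b hb => by cases b <;> simp_all⟩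
      rw [Nat.mul_comm, ← hk, List.replicate_succ, ← hv']

theorem Fin.one_add_natCast_eq_zero {p m : ℕ} [NeZero p] : (1 + m : Fin p) = 0 ↔ p ∣ m + 1 := by
  rw [add_comm, ← Nat.cast_add_one, Fin.natCast_eq_zero]

section Language

variable {n : ℕ} [NeZero n]

theorem mem_suffixFreeL_iff {w : List Bool} :
    w ∈ suffixFreeL n ↔ ∃ v, true ∉ v ∧
      (w = true :: true :: false :: v ∧ n ∣ v.length + 1 ∨
        w = true :: false :: v ∧ n + 1 ∣ v.length + 1) := by
  rw [suffixFreeL, Set.mem_union, Set.mem_ofPred_eq, Set.mem_ofPred_eq,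
    exists_eq_append_replicate_false_iff (NeZero.ne n),
    exists_eq_append_replicate_false_iff n.succ_ne_zero]
  simp only [and_or_left, exists_or, List.cons_append, List.nil_append]

theorem exists_of_append_mem_suffixFreeL {x u : List Bool} (hx : x ≠ [])
    (hu : u ∈ suffixFreeL n) (hxu : x ++ u ∈ suffixFreeL n) :
    ∃ v, x ++ u = true :: true :: false :: v ∧ n * (n + 1) ∣ v.length + 1 := by
  obtain ⟨k, hk⟩ : ∃ k, x.length = k + 1 :=
    Nat.exists_eq_succ_of_ne_zero (List.length_pos_iff.2 hx).ne'
  have hdrop : (x ++ u).drop (k + 1) = u := hk ▸ List.drop_left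
  have htrue : true ∈ u := by
    obtain ⟨v, -, ⟨rfl, -⟩ | ⟨rfl, -⟩⟩ := mem_suffixFreeL_iff.1 hu <;> simp
  -- `u` starts with `b`, and the only `b` of `xu` after its first letter is its second letter.
  obtain ⟨v, hv, ⟨hw, hvn⟩ | ⟨hw, -⟩⟩ := mem_suffixFreeL_iff.1 hxu <;>
    rw [hw, List.drop_succ_cons] at hdrop
  · rcases k with _ | k
    · rw [List.drop_zero] at hdrop
      obtain ⟨v', -, ⟨h, -⟩ | ⟨h, hvn'⟩⟩ := mem_suffixFreeL_iff.1 hu <;> rw [← hdrop] at h <;>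
        simp only [List.cons.injEq, reduceCtorEq, false_and, and_false, true_and] at h
      have hcop : Nat.Coprime n (n + 1) := Nat.coprime_self_add_right.2 (Nat.coprime_one_right n)
      exact ⟨v, hw, hcop.mul_dvd_of_dvd_of_dvd hvn (h ▸ hvn')⟩
    · rw [List.drop_succ_cons] at hdrop
      exact absurd (List.mem_of_mem_drop (hdrop ▸ htrue)) (by simpa using hv)
  · exact absurd (List.mem_of_mem_drop (hdrop ▸ htrue)) (by simpa using hv)

end Language

namespace SuffixFreeL

inductive State (n : ℕ)
  | start | readB | readBB | dead
  | cycleBB (i : Fin n)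
  | cycleB (i : Fin (n + 1))

def State.equivSum (n : ℕ) : State n ≃ Fin 4 ⊕ Fin n ⊕ Fin (n + 1) where
  toFun
    | .start => .inl 0
    | .readB => .inl 1
    | .readBB => .inl 2
    | .dead => .inl 3
    | .cycleBB i => .inr (.inl i)
    | .cycleB i => .inr (.inr i)
  invFun := Sum.elim ![.start, .readB, .readBB, .dead] (Sum.elim .cycleBB .cycleB)
  left_inv s := by cases s <;> rfl
  right_inv := by
    rintro (i | i | i)
    · fin_cases i <;> rfl
    all_goals rfl

def State.equivFin (n : ℕ) : State n ≃ Fin (2 * n + 5) :=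
  (State.equivSum n).trans <| ((Equiv.refl _).sumCongr finSumFinEquiv).trans <|
    finSumFinEquiv.trans <| finCongr (by omega)

variable (n : ℕ) [NeZero n]

def step : State n → Bool → State n
  | .start, true => .readB
  | .readB, true => .readBB
  | .readB, false => .cycleB 1
  | .readBB, false => .cycleBB 1
  | .cycleBB i, false => .cycleBB (i + 1)
  | .cycleB i, false => .cycleB (i + 1)
  | _, _ => .dead

def dfa : DFA Bool (State n) := ⟨step n, .start, {s | s = .cycleBB 0 ∨ s = .cycleB 0}⟩

@[simp] theorem dfa_step (s : State n) (a : Bool) : (dfa n).step s a = step n s a := rfl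

@[simp] theorem dfa_start : (dfa n).start = .start := rfl

@[simp] theorem mem_dfa_accept {s : State n} :
    s ∈ (dfa n).accept ↔ s = .cycleBB 0 ∨ s = .cycleB 0 := Iff.rfl

theorem evalFrom_dead (v : List Bool) : (dfa n).evalFrom .dead v = .dead := by
  induction v with
  | nil => rfl
  | cons a v ih => cases a <;> exact ih

theorem evalFrom_cycle {p : ℕ} [NeZero p] (c : Fin p → State n)
    (hfalse : ∀ i, step n (c i) false = c (i + 1)) (htrue : ∀ i, step n (c i) true = .dead)
    (i : Fin p) (v : List Bool) :
    (dfa n).evalFrom (c i) v = if true ∈ v then .dead else c (i + v.length) := by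
  induction v generalizing i with
  | nil => simp
  | cons a v ih =>
    cases a
    · simp [hfalse, ih, add_assoc, add_comm (1 : Fin p)]
    · simp [htrue, evalFrom_dead]

theorem mem_accepts_dfa_iff {w : List Bool} : w ∈ (dfa n).accepts ↔ w ∈ suffixFreeL n := by
  have hBB := evalFrom_cycle n State.cycleBB (fun _ => rfl) (fun _ => rfl)
  have hB := evalFrom_cycle n State.cycleB (fun _ => rfl) (fun _ => rfl)
  rw [mem_suffixFreeL_iff, DFA.mem_accepts, DFA.eval]
  match w with
  | [] | false :: _ | [true] | [true, true] | true :: true :: true :: _ =>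
    simp [step, evalFrom_dead]
  | true :: true :: false :: v | true :: false :: v =>
    by_cases hv : true ∈ v <;> simp [step, hBB, hB, hv, Fin.one_add_natCast_eq_zero]

end SuffixFreeL

theorem suffixFree_quadratic_witness (n : ℕ) (hn : 2 ≤ n) :
    (∃ M : DFA Bool (Fin (2 * n + 5)),
      ∀ w : List Bool, w ∈ M.accepts ↔ w ∈ suffixFreeL n) ∧
    ¬ SuffixFree (suffixFreeL n) ∧
    (∀ u w : List Bool, u ∈ suffixFreeL n → w ∈ suffixFreeL n →
      (∃ x : List Bool, x ≠ [] ∧ w = x ++ u) → n ^ 2 + n + 2 ≤ w.length) ∧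
    (([true] ++ List.replicate (n * (n + 1)) false) ∈ suffixFreeL n ∧
     ([true, true] ++ List.replicate (n * (n + 1)) false) ∈ suffixFreeL n ∧
     (∃ x : List Bool, x ≠ [] ∧
       [true, true] ++ List.replicate (n * (n + 1)) false =
         x ++ ([true] ++ List.replicate (n * (n + 1)) false)) ∧
     ([true, true] ++ List.replicate (n * (n + 1)) false).length = n ^ 2 + n + 2) := by
  have : NeZero n := ⟨by omega⟩
  have hu : [true] ++ List.replicate (n * (n + 1)) false ∈ suffixFreeL n :=
    Or.inr ⟨n, by omega, rfl⟩
  have hw : [true, true] ++ List.replicate (n * (n + 1)) false ∈ suffixFreeL n :=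
    Or.inl ⟨n + 1, by omega, by rw [Nat.mul_comm]⟩
  have hlen : ([true, true] ++ List.replicate (n * (n + 1)) false).length = n ^ 2 + n + 2 := by
    simp only [List.length_append, List.length_cons, List.length_nil, List.length_replicate]
    ring
  refine ⟨⟨(SuffixFreeL.dfa n).reindex (SuffixFreeL.State.equivFin n), fun w => ?_⟩, fun h => ?_,
    fun u w hu hw ⟨x, hx, hxu⟩ => ?_, hu, hw, ⟨[true], by simp, rfl⟩, hlen⟩
  · rw [DFA.accepts_reindex, SuffixFreeL.mem_accepts_dfa_iff]
  · simpa using congrArg List.length (h _ hu _ hw ⟨[true], rfl⟩)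
  · obtain ⟨v, hv, hdvd⟩ := exists_of_append_mem_suffixFreeL hx hu (hxu ▸ hw)
    have := Nat.le_of_dvd v.length.succ_pos hdvd
    rw [hxu, hv, List.length_cons, List.length_cons, List.length_cons]
    nlinarith
end

section
/- For every n ≥ 2, the language L = bb(a^n)^+ b ∪ b(a^(n+1))^+ b over {a, b} is not factor-free, and its shortest witness to non-factor-freeness is (b a^(n(n+1)) b, bb a^(n(n+1)) b), which has size n² + n + 3. -/
/-- The language `bb(a^n)^+ b ∪ b(a^(n+1))^+ b` over the alphabet `{a, b}`,
with `a := false` and `b := true`. -/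
def factorFreeL (n : ℕ) : Set (List Bool) :=
  {w | ∃ k : ℕ, 1 ≤ k ∧ w = [true, true] ++ List.replicate (k * n) false ++ [true]} ∪
  {w | ∃ k : ℕ, 1 ≤ k ∧ w = [true] ++ List.replicate (k * (n + 1)) false ++ [true]}

def FactorFree {α : Type*} (L : Set (List α)) : Prop :=
  ∀ u ∈ L, ∀ w ∈ L, u <:+: w → u = w

lemma x_nil_aux {t x r : List Bool} (hE : true :: t = x ++ r)
    (hx0 : List.count true x = 0) : x = [] := by
  cases x with
  | nil => rfl
  | cons a x' =>
    exfalso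
    simp only [List.cons_append, List.cons.injEq] at hE
    obtain ⟨rfl, -⟩ := hE
    simp [List.count_cons] at hx0

lemma y_nil_aux {l q y : List Bool} (hE : l ++ [true] = q ++ y)
    (hy0 : List.count true y = 0) : y = [] := by
  rcases y.eq_nil_or_concat with rfl | ⟨y', b, rfl⟩
  · rfl
  · exfalso
    rw [List.concat_eq_append, ← List.append_assoc] at hE
    have h2 := congrArg List.getLast? hE
    simp [List.getLast?_concat] at h2
    rw [List.concat_eq_append, ← h2] at hy0
    simp [List.count_append] at hy0

lemma ffl_bound (n : ℕ) (hn : 2 ≤ n) (u w : List Bool)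
    (hu : u ∈ factorFreeL n) (hw : w ∈ factorFreeL n)
    (h : ∃ x y : List Bool, x ++ y ≠ [] ∧ w = x ++ u ++ y) :
    n ^ 2 + n + 3 ≤ w.length := by
  obtain ⟨x, y, hxy, hE⟩ := h
  rcases hu with ⟨k', hk', hu⟩ | ⟨k', hk', hu⟩ <;>
    rcases hw with ⟨k, hk, hwf⟩ | ⟨k, hk, hwf⟩
  · -- u type A, w type A
    exfalso
    rw [hu, hwf] at hE
    have hc := congrArg (List.count true) hE
    simp [List.count_append, List.count_replicate, List.count_cons] at hc
    have hy : y = [] := y_nil_aux hE (by omega)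
    subst hy
    simp only [List.append_nil, List.cons_append, List.nil_append, List.append_assoc] at hE
    have hx : x = [] := x_nil_aux hE (by omega)
    subst hx
    simp at hxy
  · -- u type A, w type B: count mismatch
    exfalso
    rw [hu, hwf] at hE
    have hc := congrArg (List.count true) hE
    simp [List.count_append, List.count_replicate, List.count_cons] at hc
    omega
  · -- u type B, w type A: the real case
    rw [hu, hwf] at hE
    have hc := congrArg (List.count true) hE
    simp [List.count_append, List.count_replicate, List.count_cons] at hc
    obtain ⟨m', hm'⟩ : ∃ m', k' * (n + 1) = m' + 1 :=
      ⟨k' * (n + 1) - 1, (Nat.succ_pred_eq_of_pos (Nat.mul_pos (by omega) (by omega))).symm⟩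
    have hy : y = [] := by
      rcases y.eq_nil_or_concat with rfl | ⟨y', b, rfl⟩
      · rfl
      · exfalso
        -- last letter of w is true, so b = true, so count true y ≥ 1, so x all-false
        have hE2 : ([true, true] ++ List.replicate (k * n) false) ++ [true] =
            ((x ++ ([true] ++ List.replicate (k' * (n + 1)) false ++ [true])) ++ y') ++ [b] := by
          simpa only [List.concat_eq_append, List.append_assoc] using hE
        obtain ⟨-, h3⟩ := List.append_inj' hE2 rfl
        obtain rfl : b = true := by injection h3 with h; exact h.symm
        have hcy : 1 ≤ List.count true (y'.concat true) := by
          simp [List.concat_eq_append, List.count_append]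
        have hE' := hE
        simp only [List.concat_eq_append, List.cons_append, List.nil_append,
          List.append_assoc] at hE'
        have hx : x = [] := x_nil_aux hE' (by omega)
        subst hx
        rw [hm', List.replicate_succ] at hE'
        simp at hE'
    subst hy
    simp only [List.append_nil, List.cons_append, List.nil_append, List.append_assoc] at hE
    match x, hxy with
    | [], hxy => simp at hxy
    | a :: x', _ =>
      simp only [List.cons_append, List.cons.injEq] at hE
      obtain ⟨rfl, hE⟩ := hE
      match x' with
      | b :: x'' =>
        exfalso
        simp only [List.cons_append, List.cons.injEq] at hE
        obtain ⟨rfl, -⟩ := hE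
        simp [List.count_cons] at hc
      | [] =>
        simp only [List.nil_append, List.cons.injEq, true_and] at hE
        have hlen := congrArg List.length hE
        simp at hlen
        -- hlen : k * n = k' * (n+1)
        have hdvd : (n + 1) ∣ k := by
          have hcop : Nat.Coprime (n + 1) n := by
            simp [Nat.Coprime, Nat.gcd_comm n (n + 1)]
          exact hcop.dvd_of_dvd_mul_right ⟨k', by rw [hlen, Nat.mul_comm]⟩
        have hk2 : n + 1 ≤ k := Nat.le_of_dvd (by omega) hdvd
        rw [hwf]
        simp
        have : (n + 1) * n ≤ k * n := Nat.mul_le_mul_right n hk2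
        nlinarith
  · -- u type B, w type B
    exfalso
    rw [hu, hwf] at hE
    have hc := congrArg (List.count true) hE
    simp [List.count_append, List.count_replicate, List.count_cons] at hc
    have hy : y = [] := y_nil_aux hE (by omega)
    subst hy
    simp only [List.append_nil, List.cons_append, List.nil_append, List.append_assoc] at hE
    have hx : x = [] := x_nil_aux hE (by omega)
    subst hx
    simp at hxy

theorem factorFree_quadratic_witness (n : ℕ) (hn : 2 ≤ n) :
    ¬ FactorFree (factorFreeL n) ∧
    (∀ u w : List Bool, u ∈ factorFreeL n → w ∈ factorFreeL n →
      (∃ x y : List Bool, x ++ y ≠ [] ∧ w = x ++ u ++ y) → n ^ 2 + n + 3 ≤ w.length) ∧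
    (([true] ++ List.replicate (n * (n + 1)) false ++ [true]) ∈ factorFreeL n ∧
     ([true, true] ++ List.replicate (n * (n + 1)) false ++ [true]) ∈ factorFreeL n ∧
     (∃ x y : List Bool, x ++ y ≠ [] ∧
       [true, true] ++ List.replicate (n * (n + 1)) false ++ [true] =
         x ++ ([true] ++ List.replicate (n * (n + 1)) false ++ [true]) ++ y) ∧
     ([true, true] ++ List.replicate (n * (n + 1)) false ++ [true]).length
       = n ^ 2 + n + 3) := by
  have hmemB : ([true] ++ List.replicate (n * (n + 1)) false ++ [true]) ∈ factorFreeL n :=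
    Or.inr ⟨n, by omega, rfl⟩
  have hmemA : ([true, true] ++ List.replicate (n * (n + 1)) false ++ [true]) ∈ factorFreeL n :=
    Or.inl ⟨n + 1, by omega, by rw [Nat.mul_comm n (n + 1)]⟩
  have hinf : ∃ x y : List Bool, x ++ y ≠ [] ∧
      [true, true] ++ List.replicate (n * (n + 1)) false ++ [true] =
        x ++ ([true] ++ List.replicate (n * (n + 1)) false ++ [true]) ++ y :=
    ⟨[true], [], by simp, by simp⟩
  refine ⟨?_, fun u w hu hw h => ffl_bound n hn u w hu hw h, hmemB, hmemA, hinf, by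
    simp [List.length_append]; ring⟩
  intro hFF
  obtain ⟨x, y, hxy, hE⟩ := hinf
  have := hFF _ hmemB _ hmemA ⟨x, y, by rw [hE]⟩
  have hlen := congrArg List.length this
  simp at hlen
end

section
/- For every n ≥ 2, the language L = bbb(a^(n−1))^+ ∪ bb(a + a² + ⋯ + a^(n−1))(a^n)* ∪ b(a^(n+1))^+ over {a, b} is not suffix-convex, and every witness (u, v, w) to its non-suffix-convexity has |w| ≥ lcm(n−1, n, n+1) + 3 ≥ (n−1)n(n+1)/2 + 3; moreover (b a^i, bb a^i, bbb a^i) with i = lcm(n−1, n, n+1) is a witness. -/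
/-- The language `bbb(a^(n-1))^+ ∪ bb(a + ⋯ + a^(n-1))(a^n)* ∪ b(a^(n+1))^+`
over the alphabet `{a, b}`, with `a := false` and `b := true`. -/
def suffixConvexL (n : ℕ) : Set (List Bool) :=
  {w | ∃ j : ℕ, 0 < j ∧ (n - 1) ∣ j ∧ w = [true, true, true] ++ List.replicate j false} ∪
  {w | ∃ j : ℕ, 0 < j ∧ ¬ n ∣ j ∧ w = [true, true] ++ List.replicate j false} ∪
  {w | ∃ j : ℕ, 0 < j ∧ (n + 1) ∣ j ∧ w = [true] ++ List.replicate j false}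

def SuffixConvex {α : Type*} (L : Set (List α)) : Prop :=
  ∀ u v w : List α, u ∈ L → w ∈ L → u <:+ w → u <:+ v → v <:+ w → v ∈ L

/-!
Every word of `L` has the form `b^k a^j` with `1 ≤ k ≤ 3`, and a suffix of `b^k a^j` containing
a `b` is `b^m a^j` with `m ≤ k`. So in a witness `(u, v, w)` all three words share the block
`a^j`, and since `v` differs from both `u` and `w`, they must be `b a^j`, `bb a^j`, `bbb a^j`.
Then `u, w ∈ L` and `v ∉ L` say exactly that `n + 1`, `n - 1` and `n` divide `j`, i.e. that the
lcm divides `j`. The lower bound on the lcm holds because `(n - 1) n` and `n + 1` share at most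
the factor `2`.
-/

open List

theorem List.replicate_append_replicate_inj {α : Type*} {a b : α} (hab : a ≠ b) {k j k' j' : ℕ} :
    replicate k a ++ replicate j b = replicate k' a ++ replicate j' b ↔ k = k' ∧ j = j' := by
  classical
  refine ⟨fun h => ?_, by rintro ⟨rfl, rfl⟩; rfl⟩
  have hcount := congrArg (count a) h
  have hlength := congrArg length h
  simp only [count_append, count_replicate_self, count_replicate, beq_iff_eq, hab.symm,
    if_false, length_append, length_replicate] at hcount hlength
  omega

theorem List.eq_replicate_append_replicate_of_suffix {α : Type*} {a b : α} {s : List α} {k j : ℕ}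
    (h : s <:+ replicate k a ++ replicate j b) (ha : a ∈ s) (hab : a ≠ b) :
    ∃ m ≤ k, s = replicate m a ++ replicate j b := by
  rw [suffix_iff_eq_drop, drop_append, drop_replicate, drop_replicate, length_replicate] at h
  set i := (replicate k a ++ replicate j b).length - s.length
  refine ⟨k - i, Nat.sub_le k i, ?_⟩
  by_cases hik : i ≤ k
  · rwa [Nat.sub_eq_zero_of_le hik, Nat.sub_zero] at h
  · rw [h, Nat.sub_eq_zero_of_le (by omega : k ≤ i), replicate_zero, nil_append] at ha
    exact absurd (eq_of_mem_replicate ha) hab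

theorem replicate_append_replicate_mem_suffixConvexL_iff {n k j : ℕ} :
    replicate k true ++ replicate j false ∈ suffixConvexL n ↔
      0 < j ∧ (k = 3 ∧ n - 1 ∣ j ∨ k = 2 ∧ ¬ n ∣ j ∨ k = 1 ∧ n + 1 ∣ j) := by
  have h3 : [true, true, true] = replicate 3 true := rfl
  have h2 : [true, true] = replicate 2 true := rfl
  have h1 : [true] = replicate 1 true := rfl
  simp only [suffixConvexL, Set.mem_union, Set.mem_ofPred_eq]
  rw [h3, h2, h1]
  simp only [replicate_append_replicate_inj (by decide : true ≠ false)]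
  grind

theorem exists_eq_replicate_append_replicate_of_mem_suffixConvexL {n : ℕ} {x : List Bool}
    (hx : x ∈ suffixConvexL n) :
    ∃ k j, 0 < k ∧ k ≤ 3 ∧ x = replicate k true ++ replicate j false := by
  rcases hx with (⟨j, -, -, rfl⟩ | ⟨j, -, -, rfl⟩) | ⟨j, -, -, rfl⟩
  exacts [⟨3, j, by norm_num, le_rfl, rfl⟩, ⟨2, j, by norm_num, by norm_num, rfl⟩,
    ⟨1, j, by norm_num, by norm_num, rfl⟩]

theorem eq_of_suffixConvexL_witness {n : ℕ} {u v w : List Bool} (huv : u <:+ v) (hvw : v <:+ w)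
    (hu : u ∈ suffixConvexL n) (hw : w ∈ suffixConvexL n) (hv : v ∉ suffixConvexL n) :
    ∃ j, u = replicate 1 true ++ replicate j false ∧ v = replicate 2 true ++ replicate j false ∧
      w = replicate 3 true ++ replicate j false := by
  obtain ⟨k, j, -, hk, rfl⟩ := exists_eq_replicate_append_replicate_of_mem_suffixConvexL hw
  have hu_true : true ∈ u := by
    obtain ⟨k', j', hk', -, rfl⟩ := exists_eq_replicate_append_replicate_of_mem_suffixConvexL hu
    exact mem_append_left _ (mem_replicate.2 ⟨hk'.ne', rfl⟩)
  obtain ⟨p, hpk, rfl⟩ :=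
    List.eq_replicate_append_replicate_of_suffix hvw (huv.subset hu_true) (by decide)
  obtain ⟨m, hmp, rfl⟩ := List.eq_replicate_append_replicate_of_suffix huv hu_true (by decide)
  have hm : m ≠ 0 := by
    rintro rfl
    simp at hu_true
  have hmp_ne : m ≠ p := by rintro rfl; exact hv hu
  have hpk_ne : p ≠ k := by rintro rfl; exact hv hw
  obtain ⟨rfl, rfl, rfl⟩ : m = 1 ∧ p = 2 ∧ k = 3 := by omega
  exact ⟨j, rfl, rfl, rfl⟩

theorem sub_one_mul_mul_add_one_le_two_mul_lcm (n : ℕ) :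
    (n - 1) * n * (n + 1) ≤ 2 * ((n - 1).lcm n).lcm (n + 1) := by
  rcases n with _ | m
  · simp
  have hcop₁ : m.Coprime (m + 1) := Nat.coprime_self_add_right.2 (Nat.coprime_one_right m)
  have hcop₂ : (m + 1).Coprime (m + 2) := Nat.coprime_self_add_right.2 (Nat.coprime_one_right _)
  have hgcd : (m * (m + 1)).gcd (m + 2) ∣ 2 := by
    rw [Nat.Coprime.gcd_mul_right_cancel m hcop₂, Nat.gcd_self_add_right]
    exact Nat.gcd_dvd_right m 2
  rw [Nat.add_sub_cancel, hcop₁.lcm_eq_mul, ← Nat.gcd_mul_lcm (m * (m + 1)) (m + 1 + 1)]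
  exact Nat.mul_le_mul_right _ (Nat.le_of_dvd two_pos hgcd)

theorem suffixConvex_cubic_witness (n : ℕ) (hn : 2 ≤ n) :
    ¬ SuffixConvex (suffixConvexL n) ∧
    (∀ u v w : List Bool, u <:+ v → v <:+ w → u ∈ suffixConvexL n →
      w ∈ suffixConvexL n → v ∉ suffixConvexL n →
        Nat.lcm (Nat.lcm (n - 1) n) (n + 1) + 3 ≤ w.length) ∧
    (n - 1) * n * (n + 1) / 2 + 3 ≤ Nat.lcm (Nat.lcm (n - 1) n) (n + 1) + 3 ∧
    (([true] ++ List.replicate (Nat.lcm (Nat.lcm (n - 1) n) (n + 1)) false)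
        <:+ ([true, true] ++ List.replicate (Nat.lcm (Nat.lcm (n - 1) n) (n + 1)) false) ∧
     ([true, true] ++ List.replicate (Nat.lcm (Nat.lcm (n - 1) n) (n + 1)) false)
        <:+ ([true, true, true] ++ List.replicate (Nat.lcm (Nat.lcm (n - 1) n) (n + 1)) false) ∧
     ([true] ++ List.replicate (Nat.lcm (Nat.lcm (n - 1) n) (n + 1)) false) ∈ suffixConvexL n ∧
     ([true, true, true] ++ List.replicate (Nat.lcm (Nat.lcm (n - 1) n) (n + 1)) false)
        ∈ suffixConvexL n ∧
     ([true, true] ++ List.replicate (Nat.lcm (Nat.lcm (n - 1) n) (n + 1)) false)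
        ∉ suffixConvexL n) := by
  set N := Nat.lcm (Nat.lcm (n - 1) n) (n + 1)
  have hN : 0 < N := Nat.pos_of_ne_zero (by simp [N]; omega)
  have hdvd_iff {j : ℕ} : N ∣ j ↔ n - 1 ∣ j ∧ n ∣ j ∧ n + 1 ∣ j := by
    simp only [N, Nat.lcm_dvd_iff, and_assoc]
  obtain ⟨h₁, h₂, h₃⟩ := hdvd_iff.1 dvd_rfl
  have hb : [true] ++ replicate N false ∈ suffixConvexL n :=
    (replicate_append_replicate_mem_suffixConvexL_iff (k := 1)).2 ⟨hN, by simp [h₃]⟩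
  have hbb : [true, true] ++ replicate N false ∉ suffixConvexL n := by
    simpa [h₂] using
      (replicate_append_replicate_mem_suffixConvexL_iff (n := n) (k := 2) (j := N)).not
  have hbbb : [true, true, true] ++ replicate N false ∈ suffixConvexL n :=
    (replicate_append_replicate_mem_suffixConvexL_iff (k := 3)).2 ⟨hN, by simp [h₁]⟩
  refine ⟨fun hconv => hbb (hconv _ _ _ hb hbbb ⟨[true, true], rfl⟩ ⟨[true], rfl⟩ ⟨[true], rfl⟩),
    fun u v w huv hvw hu hw hv => ?_, ?_, ⟨[true], rfl⟩, ⟨[true], rfl⟩, hb, hbbb, hbb⟩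
  · obtain ⟨j, rfl, rfl, rfl⟩ := eq_of_suffixConvexL_witness huv hvw hu hw hv
    rw [replicate_append_replicate_mem_suffixConvexL_iff] at hu hv hw
    have : N ≤ j := Nat.le_of_dvd hu.1 (hdvd_iff.2 (by grind))
    simp only [length_append, length_replicate]
    omega
  · have := Nat.div_le_of_le_mul (sub_one_mul_mul_add_one_le_two_mul_lcm n)
    omega
end

section
/- If L is a context-free language that is infinite, then L is not subword-free; consequently, every subword-free context-free language is finite. -/
/-! A context-free grammar has finitely many rules, so its language lives over a finite alphabet.
By Higman's lemma the sublist order is a well-quasi-order on words over a finite alphabet, so every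
antichain for it — in particular every subword-free language — is finite. -/

theorem List.sublistForall₂_eq_eq_sublist {α : Type*} :
    List.SublistForall₂ ((· = ·) : α → α → Prop) = List.Sublist := by
  ext l₁ l₂
  simp [List.sublistForall₂_iff, List.forall₂_eq_eq_eq]

theorem List.partiallyWellOrderedOn_sublist {α : Type*} {s : Set α} (hs : s.Finite) :
    {l : List α | ∀ a ∈ l, a ∈ s}.PartiallyWellOrderedOn List.Sublist := by
  rw [← List.sublistForall₂_eq_eq_sublist]
  exact .partiallyWellOrderedOn_sublistForall₂ _ hs.partiallyWellOrderedOn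

theorem SubwordFree.isAntichain {α : Type*} {L : Set (List α)} (hL : SubwordFree L) :
    IsAntichain List.Sublist L :=
  fun _ hu _ hw hne hsub => hne (hL _ hu _ hw hsub)

theorem SubwordFree.finite_of_forall_mem {α : Type*} {L : Set (List α)} {s : Set α}
    (hs : s.Finite) (hLs : ∀ w ∈ L, ∀ a ∈ w, a ∈ s) (hL : SubwordFree L) : L.Finite :=
  hL.isAntichain.finite_of_partiallyWellOrderedOn
    ((List.partiallyWellOrderedOn_sublist hs).mono hLs)

namespace ContextFreeGrammar

variable {T : Type*} (g : ContextFreeGrammar T)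

def terminals : Set T :=
  {a | ∃ r ∈ g.rules, Symbol.terminal a ∈ r.output}

theorem terminals_finite : g.terminals.Finite := by
  refine (g.rules.finite_toSet.biUnion fun r _ =>
    r.output.finite_toSet.preimage (f := Symbol.terminal) ?_).subset ?_
  · exact fun _ _ _ _ h => Symbol.terminal.inj h
  · rintro a ⟨r, hr, ha⟩
    exact Set.mem_biUnion hr ha

variable {g}

theorem mem_terminals_of_derives {u v : List (Symbol T g.NT)} (h : g.Derives u v) {a : T}
    (ha : Symbol.terminal a ∈ v) : Symbol.terminal a ∈ u ∨ a ∈ g.terminals := by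
  induction h with
  | refl => exact .inl ha
  | tail _ hstep ih =>
    obtain ⟨r, hr, hrw⟩ := hstep
    obtain ⟨p, q, rfl, rfl⟩ := hrw.exists_parts
    simp only [List.mem_append] at ha
    rcases ha with (hp | hout) | hq
    · exact ih (by simp [hp])
    · exact .inr ⟨r, hr, hout⟩
    · exact ih (by simp [hq])

theorem mem_terminals_of_mem_language {w : List T} (hw : w ∈ g.language) {a : T}
    (ha : a ∈ w) : a ∈ g.terminals := by
  rw [mem_language_iff] at hw
  refine (mem_terminals_of_derives hw (List.mem_map_of_mem ha)).resolve_left ?_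
  simp

end ContextFreeGrammar

theorem Language.IsContextFree.exists_finite_alphabet {T : Type*} {L : Language T}
    (hL : L.IsContextFree) : ∃ s : Set T, s.Finite ∧ ∀ w ∈ L, ∀ a ∈ w, a ∈ s := by
  obtain ⟨g, rfl⟩ := hL
  exact ⟨g.terminals, g.terminals_finite,
    fun _ hw _ ha => ContextFreeGrammar.mem_terminals_of_mem_language hw ha⟩

theorem subwordFree_contextFree_finite {α : Type*} (L : Language α)
    (hcf : L.IsContextFree) :
    (Set.Infinite (L : Set (List α)) → ¬ SubwordFree (L : Set (List α))) ∧
    (SubwordFree (L : Set (List α)) → Set.Finite (L : Set (List α))) := by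
  obtain ⟨s, hs, hLs⟩ := hcf.exists_finite_alphabet
  have hfinite : SubwordFree (L : Set (List α)) → Set.Finite (L : Set (List α)) :=
    SubwordFree.finite_of_forall_mem hs hLs
  exact ⟨fun hinf hsf => hinf (hfinite hsf), hfinite⟩
end
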